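/- With R the presented MU_*-algebra as above, the assignment ρ(u) = u, ρ(d_{l,j}^{(i)}) = Σ_{k≥0} t_{l,j+k}^{(i)} u^k, ρ(q_j) = Σ_{k≥0} c_{j+k} u^k, ρ(η_i) = Σ_{k≥0} a_{0,1+k}^{(i)} u^k defines a well-defined MU_*-algebra homomorphism ρ : R → MU_*[[u]]/([p]u), i.e. these assignments satisfy all seven defining relations of R. -/

import Mathlib

open PowerSeries Finset

/-- Substitution of two power series with zero constant term into a two-variable series
with coefficients `a k j`:  `F(f,g) = Σ_{k,j} a k j * f^k * g^j`. -/
noncomputable def Fsub (A : Type) [CommRing A] (a : ℕ → ℕ → A)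
    (f g : PowerSeries A) : PowerSeries A :=
  PowerSeries.mk fun n => ∑ k ∈ Finset.range (n + 1), ∑ j ∈ Finset.range (n + 1),
    a k j * PowerSeries.coeff n (f ^ k * g ^ j)

/-- The `n`-series `[n](u)` of the formal group law with coefficients `a`. -/
noncomputable def nser (A : Type) [CommRing A] (a : ℕ → ℕ → A) : ℕ → PowerSeries A
  | 0 => 0
  | n + 1 => Fsub A a (nser A a n) PowerSeries.X

/-- `a : ℕ → ℕ → A` is the coefficient family of a commutative one-dimensional formal
group law `F(x,y) = Σ a k j x^k y^j`: `F(x,0) = x`, `F(0,y) = y`, `F` commutative and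
associative (associativity expressed on all substituted triples of power series with zero
constant term). -/
def IsFGL (A : Type) [CommRing A] (a : ℕ → ℕ → A) : Prop :=
  (∀ k, a k 0 = if k = 1 then 1 else 0) ∧
  (∀ j, a 0 j = if j = 1 then 1 else 0) ∧
  (∀ k j, a k j = a j k) ∧
  (∀ f g h : PowerSeries A,
    PowerSeries.constantCoeff f = 0 → PowerSeries.constantCoeff g = 0 →
    PowerSeries.constantCoeff h = 0 →
    Fsub A a (Fsub A a f g) h = Fsub A a f (Fsub A a g h))

/-- Composition `f(g(u))` of one-variable power series (`g` with zero constant term). -/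
noncomputable def pscomp (A : Type) [CommRing A] (f g : PowerSeries A) : PowerSeries A :=
  PowerSeries.mk fun n => ∑ k ∈ Finset.range (n + 1),
    PowerSeries.coeff k f * PowerSeries.coeff n (g ^ k)

open MvPolynomial

/-- Generators of the presented `MU_*`-algebra model `R` of `MU^{C_p}_*`:
`u`, `d_{l,j}^{(i)}` (written `d i l j`), `η_i`, `q_j`. -/
inductive Gen : Type
  | u : Gen
  | d : ℕ → ℕ → ℕ → Gen
  | eta : ℕ → Gen
  | q : ℕ → Gen

/-- The defining relations of `R` (Theorem 3.1): for `1 ≤ i ≤ p-1` and `l, j ≥ 0`,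
`d_{l,j}^{(i)} − t_{l,j}^{(i)} = u·d_{l,j+1}^{(i)}`;  `d_{0,j}^{(1)} = 0`;
`q_j − c_j = u·q_{j+1}`;  `q₀ = 0`;  `η₁ = 1`;
`η_i(u·d_{0,0}^{(i)} + i⁻¹) = 1 + k_i·q₁`;  `η_i·q₁ = i·q₁`. -/
def rels (MU : Type) [CommRing MU] (p : ℕ) (t : ℕ → ℕ → ℕ → MU) (c : ℕ → MU)
    (inv kk : ℕ → ℕ) : Set (MvPolynomial Gen MU) :=
  {r | (∃ i l j, 1 ≤ i ∧ i ≤ p - 1 ∧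
          r = X (Gen.d i l j) - MvPolynomial.C (t i l j) - X Gen.u * X (Gen.d i l (j + 1))) ∨
       (∃ j, r = X (Gen.d 1 0 j)) ∨
       (∃ j, r = X (Gen.q j) - MvPolynomial.C (c j) - X Gen.u * X (Gen.q (j + 1))) ∨
       r = X (Gen.q 0) ∨
       r = X (Gen.eta 1) - 1 ∨
       (∃ i, 1 ≤ i ∧ i ≤ p - 1 ∧
          r = X (Gen.eta i) * (X Gen.u * X (Gen.d i 0 0) + MvPolynomial.C ((inv i : MU)))
              - 1 - MvPolynomial.C ((kk i : MU)) * X (Gen.q 1)) ∨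
       (∃ i, 1 ≤ i ∧ i ≤ p - 1 ∧
          r = X (Gen.eta i) * X (Gen.q 1) - MvPolynomial.C ((i : MU)) * X (Gen.q 1))}

/-- The presented `MU_*`-algebra `R ≅ MU^{C_p}_*`. -/
abbrev Rring (MU : Type) [CommRing MU] (p : ℕ) (t : ℕ → ℕ → ℕ → MU) (c : ℕ → MU)
    (inv kk : ℕ → ℕ) : Type :=
  MvPolynomial Gen MU ⧸ Ideal.span (rels MU p t c inv kk)

variable {MU : Type} [CommRing MU]

/-- The image of a generator in `R`. -/
noncomputable def gen (MU : Type) [CommRing MU] (p : ℕ) (t : ℕ → ℕ → ℕ → MU)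
    (c : ℕ → MU) (inv kk : ℕ → ℕ) (g : Gen) : Rring MU p t c inv kk :=
  Ideal.Quotient.mk (Ideal.span (rels MU p t c inv kk)) (X g)

/-- The series `f_i(u) = Σ_{j≥0} a^{(m)}_{0,j+1}([i](u))^j` with `m = i⁻¹`. -/
noncomputable def fser (A : Type) [CommRing A] (a : ℕ → ℕ → A) (i m : ℕ) :
    PowerSeries A :=
  PowerSeries.mk fun n => ∑ j ∈ Finset.range (n + 1),
    PowerSeries.coeff (j + 1) (nser A a m) * PowerSeries.coeff n (nser A a i ^ j)

/-! Each defining relation of `R` becomes an identity of power series modulo `[p](u)`.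
The shift relations for `d` and `q` are `Σ_k s_{j+k} u^k = s_j + u Σ_k s_{j+1+k} u^k`, and
`q₀ ↦ [p](u)`. The relations for `η_i` come from the formal group law. Since `Fsub` agrees with
its truncation to total degree `N` up to `u^(N+1)`, substitution commutes with `F` and
`F(x, y) = x + y + x y F'(x, y)`; hence `[m]([i](u)) = [m i](u)` and `[k p](u) = [p](u)·G` with
`G(0) = k`. Writing `[n](u) = u E_n(u)`, so that `E_n(0) = n` and `q₁ ↦ E_p`, we get
`u E_i f_i = [i⁻¹ i](u) = [1 + k_i p](u) = u + u E_p G`, i.e. `E_i f_i = 1 + E_p G` with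
`G(0) = k_i`. What remains of the `η_i` relations is `E_p` times a series without constant
term, a multiple of `u E_p = [p](u)`. -/

namespace PowerSeries

variable {A : Type} [CommRing A]

theorem coeff_pow_mul_pow_of_lt {f g : A⟦X⟧} (hf : constantCoeff f = 0)
    (hg : constantCoeff g = 0) {k j n : ℕ} (h : n < k + j) :
    coeff n (f ^ k * g ^ j) = 0 := by
  have hX : X ^ (k + j) ∣ f ^ k * g ^ j := by
    rw [pow_add]
    exact mul_dvd_mul (pow_dvd_pow_of_dvd (X_dvd_iff.mpr hf) k)
      (pow_dvd_pow_of_dvd (X_dvd_iff.mpr hg) j)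
  exact X_pow_dvd_iff.mp hX n h

theorem coeff_eq_of_X_pow_dvd_sub {f g : A⟦X⟧} {N n : ℕ} (h : X ^ (N + 1) ∣ f - g)
    (hn : n ≤ N) : coeff n f = coeff n g :=
  sub_eq_zero.mp (by rw [← map_sub]; exact X_pow_dvd_iff.mp h n (by omega))

theorem X_pow_dvd_subst_sub_subst {g f₁ f₂ : A⟦X⟧} (hg : constantCoeff g = 0) {N : ℕ}
    (h : X ^ N ∣ f₁ - f₂) : X ^ N ∣ f₁.subst g - f₂.subst g := by
  have hs := HasSubst.of_constantCoeff_zero' hg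
  obtain ⟨u, hu⟩ := h
  rw [← subst_sub hs, hu, subst_mul hs, subst_pow hs, subst_X hs]
  exact (pow_dvd_pow_of_dvd (X_dvd_iff.mpr hg) N).mul_right _

theorem pscomp_eq_subst (f : A⟦X⟧) {g : A⟦X⟧} (hg : constantCoeff g = 0) :
    pscomp A f g = f.subst g := by
  ext n
  rw [coeff_subst' (HasSubst.of_constantCoeff_zero' hg), pscomp, coeff_mk,
    finsum_eq_sum_of_support_subset _ (s := Finset.range (n + 1)) fun k hk => ?_]
  · simp only [smul_eq_mul]
  · contrapose! hk
    have hz : coeff n (g ^ k) = 0 :=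
      X_pow_dvd_iff.mp (pow_dvd_pow_of_dvd (X_dvd_iff.mpr hg) k) n (by simpa using hk)
    simp [hz]

theorem X_mul_mk_coeff_one_add {f : A⟦X⟧} (hf : constantCoeff f = 0) :
    X * mk (fun k => coeff (1 + k) f) = f := by
  conv_rhs => rw [eq_X_mul_shift_add_const f]
  simp [hf, add_comm]

theorem mk_add_eq_C_add_X_mul_mk (s : ℕ → A) (j : ℕ) :
    mk (fun k => s (j + k)) = C (s j) + X * mk (fun k => s (j + 1 + k)) := by
  ext (_ | n)
  · simp
  · simp [coeff_succ_X_mul, add_assoc, add_comm 1]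

theorem mul_mem_span_of_X_mul_eq {P Q s : A⟦X⟧} (hQ : X * Q = P) (hs : constantCoeff s = 0) :
    Q * s ∈ Ideal.span {P} := by
  obtain ⟨s', rfl⟩ := X_dvd_iff.mpr hs
  rw [Ideal.mem_span_singleton, ← hQ]
  exact ⟨s', by ring⟩

noncomputable def truncFsub (a : ℕ → ℕ → A) (N : ℕ) (f g : A⟦X⟧) : A⟦X⟧ :=
  ∑ k ∈ Finset.range (N + 1), ∑ j ∈ Finset.range (N + 1), a k j • (f ^ k * g ^ j)

theorem X_pow_dvd_Fsub_sub_truncFsub (a : ℕ → ℕ → A) {f g : A⟦X⟧}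
    (hf : constantCoeff f = 0) (hg : constantCoeff g = 0) (N : ℕ) :
    X ^ (N + 1) ∣ Fsub A a f g - truncFsub a N f g := by
  refine X_pow_dvd_iff.mpr fun n hn => ?_
  rw [map_sub, sub_eq_zero, Fsub, coeff_mk, truncFsub]
  simp only [map_sum, coeff_smul, smul_eq_mul]
  rw [← Finset.sum_product', ← Finset.sum_product']
  refine Finset.sum_subset (Finset.product_subset_product ?_ ?_) fun x hx hx' => ?_
  · exact Finset.range_subset_range.2 (by omega)
  · exact Finset.range_subset_range.2 (by omega)
  simp only [Finset.mem_product, Finset.mem_range] at hx hx'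
  rw [coeff_pow_mul_pow_of_lt hf hg (by omega), mul_zero]

theorem truncFsub_succ {a : ℕ → ℕ → A} (hFGL : IsFGL A a) (N : ℕ) (f g : A⟦X⟧) :
    truncFsub a (N + 1) f g =
      f + g + f * g * truncFsub (fun k j => a (k + 1) (j + 1)) N f g := by
  rw [truncFsub, Finset.sum_range_succ']
  simp_rw [Finset.sum_range_succ' _ (N + 1), Finset.sum_add_distrib]
  simp only [hFGL.1, hFGL.2.1, Nat.add_eq_right, pow_zero, pow_one, mul_one, one_mul, ite_smul,
    one_smul, zero_smul, sum_ite_eq', mem_range, lt_add_iff_pos_left, Order.lt_add_one_iff,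
    zero_le, ↓reduceIte, zero_add, add_zero, zero_ne_one, truncFsub, mul_sum,
    Algebra.mul_smul_comm]
  rw [add_assoc, add_comm]
  congr 1
  refine Finset.sum_congr rfl fun k _ => Finset.sum_congr rfl fun j _ => ?_
  congr 1
  ring

theorem Fsub_eq_add_add_mul {a : ℕ → ℕ → A} (hFGL : IsFGL A a) {f g : A⟦X⟧}
    (hf : constantCoeff f = 0) (hg : constantCoeff g = 0) :
    Fsub A a f g = f + g + f * g * Fsub A (fun k j => a (k + 1) (j + 1)) f g := by
  ext n
  have hF := X_pow_dvd_Fsub_sub_truncFsub a hf hg (n + 1)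
  rw [truncFsub_succ hFGL] at hF
  have hF' : X ^ (n + 1) ∣ (f + g + f * g * Fsub A (fun k j => a (k + 1) (j + 1)) f g) -
      (f + g + f * g * truncFsub (fun k j => a (k + 1) (j + 1)) n f g) := by
    rw [add_sub_add_left_eq_sub, ← mul_sub]
    exact (X_pow_dvd_Fsub_sub_truncFsub _ hf hg n).mul_left _
  rw [coeff_eq_of_X_pow_dvd_sub hF (by omega), coeff_eq_of_X_pow_dvd_sub hF' le_rfl]

theorem Fsub_zero_left {a : ℕ → ℕ → A} (hFGL : IsFGL A a) {g : A⟦X⟧}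
    (hg : constantCoeff g = 0) : Fsub A a 0 g = g := by
  simpa using Fsub_eq_add_add_mul hFGL (map_zero _) hg

theorem Fsub_zero_right {a : ℕ → ℕ → A} (hFGL : IsFGL A a) {f : A⟦X⟧}
    (hf : constantCoeff f = 0) : Fsub A a f 0 = f := by
  simpa using Fsub_eq_add_add_mul hFGL hf (map_zero _)

theorem constantCoeff_Fsub (a : ℕ → ℕ → A) (f g : A⟦X⟧) :
    constantCoeff (Fsub A a f g) = a 0 0 := by
  rw [← coeff_zero_eq_constantCoeff_apply, Fsub, coeff_mk]
  simp

theorem subst_Fsub (a : ℕ → ℕ → A) {f h g : A⟦X⟧} (hf : constantCoeff f = 0)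
    (hh : constantCoeff h = 0) (hg : constantCoeff g = 0) :
    (Fsub A a f h).subst g = Fsub A a (f.subst g) (h.subst g) := by
  have hs := HasSubst.of_constantCoeff_zero' hg
  have hf' : constantCoeff (f.subst g) = 0 := constantCoeff_subst_eq_zero hg f hf
  have hh' : constantCoeff (h.subst g) = 0 := constantCoeff_subst_eq_zero hg h hh
  have htrunc (N : ℕ) :
      (truncFsub a N f h).subst g = truncFsub a N (f.subst g) (h.subst g) := by
    simp [truncFsub, ← coe_substAlgHom hs, map_sum]
  ext n
  rw [coeff_eq_of_X_pow_dvd_sub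
      (X_pow_dvd_subst_sub_subst hg (X_pow_dvd_Fsub_sub_truncFsub a hf hh n)) le_rfl,
    htrunc, coeff_eq_of_X_pow_dvd_sub (X_pow_dvd_Fsub_sub_truncFsub a hf' hh' n) le_rfl]

theorem constantCoeff_nser {a : ℕ → ℕ → A} (hFGL : IsFGL A a) (n : ℕ) :
    constantCoeff (nser A a n) = 0 := by
  cases n with
  | zero => simp [nser]
  | succ n => simp [nser, constantCoeff_Fsub, hFGL.1 0]

theorem nser_one {a : ℕ → ℕ → A} (hFGL : IsFGL A a) : nser A a 1 = X :=
  Fsub_zero_left hFGL constantCoeff_X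

theorem nser_succ_eq_add_add_mul {a : ℕ → ℕ → A} (hFGL : IsFGL A a) (n : ℕ) :
    nser A a (n + 1) =
      nser A a n + X + nser A a n * X * Fsub A (fun k j => a (k + 1) (j + 1)) (nser A a n) X :=
  Fsub_eq_add_add_mul hFGL (constantCoeff_nser hFGL n) constantCoeff_X

theorem nser_add {a : ℕ → ℕ → A} (hFGL : IsFGL A a) (m n : ℕ) :
    nser A a (m + n) = Fsub A a (nser A a m) (nser A a n) := by
  induction n with
  | zero => exact (Fsub_zero_right hFGL (constantCoeff_nser hFGL m)).symm
  | succ n ih =>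
    rw [← add_assoc, nser, ih, hFGL.2.2.2 _ _ _ (constantCoeff_nser hFGL m)
      (constantCoeff_nser hFGL n) constantCoeff_X, nser]

theorem coeff_one_nser {a : ℕ → ℕ → A} (hFGL : IsFGL A a) (n : ℕ) :
    coeff 1 (nser A a n) = n := by
  induction n with
  | zero => simp [nser]
  | succ n ih =>
    rw [nser_succ_eq_add_add_mul hFGL, mul_comm (nser A a n), mul_assoc, map_add, map_add,
      coeff_succ_X_mul, coeff_zero_eq_constantCoeff_apply, map_mul, constantCoeff_nser hFGL,
      ih]
    simp

theorem nser_mul {a : ℕ → ℕ → A} (hFGL : IsFGL A a) (m i : ℕ) :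
    nser A a (m * i) = (nser A a m).subst (nser A a i) := by
  have hi := constantCoeff_nser hFGL i
  induction m with
  | zero => simp [nser, ← coe_substAlgHom (HasSubst.of_constantCoeff_zero' hi)]
  | succ m ih =>
    rw [add_mul, one_mul, nser_add hFGL, ih, nser, subst_Fsub a (constantCoeff_nser hFGL m)
      constantCoeff_X hi, subst_X (HasSubst.of_constantCoeff_zero' hi)]

theorem fser_eq_pscomp (a : ℕ → ℕ → A) (i m : ℕ) :
    fser A a i m = pscomp A (mk fun j => coeff (1 + j) (nser A a m)) (nser A a i) := by
  ext n
  simp [fser, pscomp, add_comm 1]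

theorem nser_mul_fser {a : ℕ → ℕ → A} (hFGL : IsFGL A a) (i m : ℕ) :
    nser A a i * fser A a i m = nser A a (m * i) := by
  have hs := HasSubst.of_constantCoeff_zero' (constantCoeff_nser hFGL i)
  rw [fser_eq_pscomp, pscomp_eq_subst _ (constantCoeff_nser hFGL i), nser_mul hFGL]
  conv_rhs =>
    rw [← X_mul_mk_coeff_one_add (constantCoeff_nser hFGL m), subst_mul hs, subst_X hs]

theorem exists_nser_mul_eq {a : ℕ → ℕ → A} (hFGL : IsFGL A a) (k n : ℕ) :
    ∃ G : A⟦X⟧, nser A a (k * n) = nser A a n * G ∧ constantCoeff G = k := by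
  induction k with
  | zero => exact ⟨0, by simp [nser], by simp⟩
  | succ k ih =>
    obtain ⟨G, hG, hG0⟩ := ih
    have hkn := constantCoeff_nser hFGL (k * n)
    refine ⟨G + 1 + nser A a (k * n) *
      Fsub A (fun r s => a (r + 1) (s + 1)) (nser A a (k * n)) (nser A a n), ?_, ?_⟩
    · rw [add_mul, one_mul, nser_add hFGL,
        Fsub_eq_add_add_mul hFGL hkn (constantCoeff_nser hFGL n), hG]
      ring
    · simp [hG0, hkn]

theorem exists_nser_one_add_mul_eq {a : ℕ → ℕ → A} (hFGL : IsFGL A a) (k n : ℕ) :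
    ∃ G : A⟦X⟧, nser A a (1 + k * n) = X + nser A a n * G ∧ constantCoeff G = k := by
  obtain ⟨G, hG, hG0⟩ := exists_nser_mul_eq hFGL k n
  have hkn := constantCoeff_nser hFGL (k * n)
  refine ⟨G * (1 + X * Fsub A (fun r s => a (r + 1) (s + 1)) X (nser A a (k * n))), ?_, ?_⟩
  · rw [nser_add hFGL, nser_one hFGL, Fsub_eq_add_add_mul hFGL constantCoeff_X hkn, hG]
    ring
  · simp [hG0]

theorem exists_mk_coeff_nser_mul_fser_eq_one_add {a : ℕ → ℕ → A} (hFGL : IsFGL A a) {i m k n : ℕ}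
    (h : m * i = 1 + k * n) :
    ∃ G : A⟦X⟧, mk (fun j => coeff (1 + j) (nser A a i)) * fser A a i m =
      1 + mk (fun j => coeff (1 + j) (nser A a n)) * G ∧ constantCoeff G = k := by
  obtain ⟨G, hG, hG0⟩ := exists_nser_one_add_mul_eq hFGL k n
  refine ⟨G, X_mul_cancel ?_, hG0⟩
  calc X * (mk (fun j => coeff (1 + j) (nser A a i)) * fser A a i m)
      = nser A a i * fser A a i m := by
        rw [← mul_assoc, X_mul_mk_coeff_one_add (constantCoeff_nser hFGL i)]
    _ = X + nser A a n * G := by rw [nser_mul_fser hFGL, h, hG]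
    _ = X * (1 + mk (fun j => coeff (1 + j) (nser A a n)) * G) := by
        rw [mul_add, mul_one, ← mul_assoc, X_mul_mk_coeff_one_add (constantCoeff_nser hFGL n)]

theorem fser_one_one {a : ℕ → ℕ → A} (hFGL : IsFGL A a) : fser A a 1 1 = 1 :=
  X_mul_cancel (by rw [mul_one, ← nser_one hFGL, nser_mul_fser hFGL, mul_one])

end PowerSeries

noncomputable def rhoGen {A : Type} [CommRing A] (a : ℕ → ℕ → A) (t : ℕ → ℕ → ℕ → A)
    (c : ℕ → A) : Gen → PowerSeries A
  | Gen.u => PowerSeries.X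
  | Gen.d i l j => PowerSeries.mk fun k => t i l (j + k)
  | Gen.q j => PowerSeries.mk fun k => c (j + k)
  | Gen.eta i => PowerSeries.mk fun k => PowerSeries.coeff (1 + k) (nser A a i)

section Relations

variable {A : Type} [CommRing A] {a : ℕ → ℕ → A} {p : ℕ} {t : ℕ → ℕ → ℕ → A}
  {inv kk : ℕ → ℕ}

theorem t_one_zero_eq_zero (hFGL : IsFGL A a) (hp : 2 ≤ p)
    (hinv : ∀ i, 1 ≤ i → i ≤ p - 1 → 1 ≤ inv i ∧ inv i ≤ p - 1 ∧ i * inv i = 1 + kk i * p)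
    (hti : ∀ i, 1 ≤ i → i ≤ p - 1 →
      PowerSeries.C ((inv i : A)) + PowerSeries.X * PowerSeries.mk (fun k => t i 0 k) =
        fser A a i (inv i))
    (k : ℕ) : t 1 0 k = 0 := by
  obtain ⟨-, hle, heq⟩ := hinv 1 le_rfl (by omega)
  have hinv1 : inv 1 = 1 := by
    rcases Nat.eq_zero_or_pos (kk 1) with hk | hk
    · simpa [hk] using heq
    · have := Nat.le_mul_of_pos_left p hk
      omega
  have h := hti 1 le_rfl (by omega)
  rw [hinv1, fser_one_one hFGL, Nat.cast_one, map_one, add_eq_left] at h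
  simpa [PowerSeries.coeff_succ_X_mul] using congrArg (PowerSeries.coeff (k + 1)) h

theorem aeval_rhoGen_mem_span_of_mem_rels (hFGL : IsFGL A a) (hp : 2 ≤ p) {c : ℕ → A}
    (hc : ∀ j, c j = PowerSeries.coeff j (nser A a p))
    (hinv : ∀ i, 1 ≤ i → i ≤ p - 1 → 1 ≤ inv i ∧ inv i ≤ p - 1 ∧ i * inv i = 1 + kk i * p)
    (hti : ∀ i, 1 ≤ i → i ≤ p - 1 →
      PowerSeries.C ((inv i : A)) + PowerSeries.X * PowerSeries.mk (fun k => t i 0 k) =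
        fser A a i (inv i))
    {r : MvPolynomial Gen A} (hr : r ∈ rels A p t c inv kk) :
    MvPolynomial.aeval (rhoGen a t c) r ∈ Ideal.span {nser A a p} := by
  obtain rfl : c = fun j => PowerSeries.coeff j (nser A a p) := funext hc
  have hQ := X_mul_mk_coeff_one_add (constantCoeff_nser hFGL p)
  rcases hr with ⟨i, l, j, -, -, rfl⟩ | ⟨j, rfl⟩ | ⟨j, rfl⟩ | rfl | rfl |
    ⟨i, hi1, hi2, rfl⟩ | ⟨i, -, -, rfl⟩
  · simp [rhoGen, mk_add_eq_C_add_X_mul_mk (t i l) j]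
  · have hd : (PowerSeries.mk fun k => t 1 0 (j + k)) = 0 := by
      ext k
      simp [t_one_zero_eq_zero hFGL hp hinv hti]
    simp [rhoGen, hd]
  · simp [rhoGen, mk_add_eq_C_add_X_mul_mk (fun j => PowerSeries.coeff j (nser A a p)) j]
  · have hq : (PowerSeries.mk fun k => PowerSeries.coeff k (nser A a p)) = nser A a p := by
      ext k
      simp
    simp [rhoGen, hq]
  · have he : (PowerSeries.mk fun k => PowerSeries.coeff (1 + k) (PowerSeries.X : A⟦X⟧)) = 1 :=
      PowerSeries.X_mul_cancel
        (by rw [X_mul_mk_coeff_one_add PowerSeries.constantCoeff_X, mul_one])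
    simp [rhoGen, nser_one hFGL, he]
  · obtain ⟨G, hG, hG0⟩ := exists_mk_coeff_nser_mul_fser_eq_one_add hFGL
      ((mul_comm _ _).trans (hinv i hi1 hi2).2.2)
    have hD := hti i hi1 hi2
    rw [map_natCast, add_comm] at hD
    simp only [map_natCast, map_sub, map_mul, aeval_X, rhoGen, map_add, zero_add, map_one, hD, hG]
    convert mul_mem_span_of_X_mul_eq hQ (s := G - (kk i : A⟦X⟧)) (by simp [hG0])
      using 1
    ring
  · simp only [map_natCast, map_sub, map_mul, aeval_X, rhoGen]
    convert mul_mem_span_of_X_mul_eq hQ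
      (s := PowerSeries.mk (fun k => PowerSeries.coeff (1 + k) (nser A a i)) - (i : A⟦X⟧)) ?_
      using 1
    · ring
    · rw [map_sub, map_natCast, ← PowerSeries.coeff_zero_eq_constantCoeff_apply,
        PowerSeries.coeff_mk, coeff_one_nser hFGL, sub_self]

end Relations

/-- the assignments `ρ(u) = u`, `ρ(d_{l,j}^{(i)}) = Σ_k t_{l,j+k}^{(i)} u^k`,
`ρ(q_j) = Σ_k c_{j+k} u^k`, `ρ(η_i) = Σ_k a_{0,1+k}^{(i)} u^k` define a well-defined
`MU_*`-algebra homomorphism `ρ : R → MU_*[[u]]/([p]u)`, i.e. they satisfy all seven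
defining relations of `R`.  Here `MU_*` carries a formal group law `a`, `c_j` is the
`j`-th coefficient of the `p`-series, and the `0`-th row `t_{0,•}^{(i)}` (together with
`t_{0,−1}^{(i)} = i⁻¹`) consists of the coefficients of `f_i(u)`, so that
`([i]u)⁻¹ = u⁻¹ f_i(u)` modulo `[p]u`. -/
theorem stmt_9 (MU : Type) [CommRing MU] (a : ℕ → ℕ → MU) (hFGL : IsFGL MU a)
    (p : ℕ) (hp : p.Prime)
    (t : ℕ → ℕ → ℕ → MU) (c : ℕ → MU) (inv kk : ℕ → ℕ)
    (hc : ∀ j, c j = PowerSeries.coeff j (nser MU a p))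
    (hinv : ∀ i, 1 ≤ i → i ≤ p - 1 →
      1 ≤ inv i ∧ inv i ≤ p - 1 ∧ i * inv i = 1 + kk i * p)
    (hti : ∀ i, 1 ≤ i → i ≤ p - 1 →
      PowerSeries.C ((inv i : MU)) +
        PowerSeries.X * PowerSeries.mk (fun k => t i 0 k) = fser MU a i (inv i)) :
    ∃ ρ : Rring MU p t c inv kk →ₐ[MU]
        (PowerSeries MU ⧸ Ideal.span {nser MU a p}),
      ρ (gen MU p t c inv kk Gen.u) =
        Ideal.Quotient.mk (Ideal.span {nser MU a p}) PowerSeries.X ∧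
      (∀ i l j, 1 ≤ i → i ≤ p - 1 →
        ρ (gen MU p t c inv kk (Gen.d i l j)) =
          Ideal.Quotient.mk (Ideal.span {nser MU a p})
            (PowerSeries.mk fun k => t i l (j + k))) ∧
      (∀ j, ρ (gen MU p t c inv kk (Gen.q j)) =
          Ideal.Quotient.mk (Ideal.span {nser MU a p})
            (PowerSeries.mk fun k => c (j + k))) ∧
      (∀ i, 1 ≤ i → i ≤ p - 1 →
        ρ (gen MU p t c inv kk (Gen.eta i)) =
          Ideal.Quotient.mk (Ideal.span {nser MU a p})
            (PowerSeries.mk fun k => PowerSeries.coeff (1 + k) (nser MU a i))) := by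
  let φ := (Ideal.Quotient.mkₐ MU (Ideal.span {nser MU a p})).comp
    (MvPolynomial.aeval (rhoGen a t c))
  have hker : Ideal.span (rels MU p t c inv kk) ≤ RingHom.ker φ :=
    Ideal.span_le.mpr fun r hr => Ideal.Quotient.eq_zero_iff_mem.mpr
      (aeval_rhoGen_mem_span_of_mem_rels hFGL hp.two_le hc hinv hti hr)
  have hφ : ∀ r ∈ Ideal.span (rels MU p t c inv kk), φ r = 0 := fun _ hr => hker hr
  have hρ (g : Gen) : Ideal.Quotient.liftₐ _ φ hφ (gen MU p t c inv kk g) =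
      Ideal.Quotient.mk _ (rhoGen a t c g) :=
    (AlgHom.congr_fun (Ideal.Quotient.liftₐ_comp _ φ hφ) (MvPolynomial.X g)).trans (by simp [φ])
  exact ⟨_, hρ Gen.u, fun i l j _ _ => hρ _, fun j => hρ _, fun i _ _ => hρ _⟩
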